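/- arXiv:1611.07199 — 2 statements merged into one kernel-verified Lean document; each statement's English description precedes it below -/
import Mathlib

section
/- Let X be a Banach space that strongly generates its weakly compact sets via a weakly compact set G (i.e., X is SWCG witnessed by G). Let (Ω,Σ,μ) be a probability space and K ⊆ L¹(μ,X) a set such that every countable subset of K is a δS-set. Then K is a δS-set. -/
open MeasureTheory Filter Set ENNReal Pointwise

noncomputable section

def IsWeaklyCompact {X : Type*} [NormedAddCommGroup X] [NormedSpace ℝ X] (W : Set X) : Prop :=
  IsCompact (toWeakSpace ℝ X '' W)

def IsRelWeaklyCompact {X : Type*} [NormedAddCommGroup X] [NormedSpace ℝ X] (W : Set X) : Prop :=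
  IsCompact (closure (toWeakSpace ℝ X '' W))

variable {Ω : Type*} [MeasurableSpace Ω] {X : Type*} [NormedAddCommGroup X] [NormedSpace ℝ X]

/-- A set of functions in `L¹(μ,X)` is uniformly integrable if it is bounded and the integrals
of the norms over small sets are uniformly small. -/
def UnifIntegrableSet (μ : Measure Ω) (K : Set (Lp X 1 μ)) : Prop :=
  (∃ C : ℝ, ∀ f ∈ K, ‖f‖ ≤ C) ∧
  ∀ ε : ℝ, 0 < ε → ∃ δ : ℝ, 0 < δ ∧ ∀ f ∈ K, ∀ A : Set Ω, μ A ≤ ENNReal.ofReal δ →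
    ∫ ω in A, ‖(f : Ω → X) ω‖ ∂μ ≤ ε

/-- `K ⊆ L¹(μ,X)` is a δS-set if it is uniformly integrable and for every `δ > 0` there is a
weakly compact `W ⊆ X` with `μ (f ⁻¹' W) ≥ 1 - δ` for all `f ∈ K`. -/
def IsDeltaSSet (μ : Measure Ω) (K : Set (Lp X 1 μ)) : Prop :=
  UnifIntegrableSet μ K ∧
  ∀ δ : ℝ, 0 < δ → ∃ W : Set X, IsWeaklyCompact W ∧
    ∀ f ∈ K, 1 - ENNReal.ofReal δ ≤ μ ((f : Ω → X) ⁻¹' W)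

/-- A Banach space `X` has property (δSμ) if every relatively weakly compact subset of
`L¹(μ,X)` is a δS-set. -/
def DeltaSProp (μ : Measure Ω) (X : Type*) [NormedAddCommGroup X] [NormedSpace ℝ X] : Prop :=
  ∀ K : Set (Lp X 1 μ), IsRelWeaklyCompact K → IsDeltaSSet μ K

/-- `G` strongly generates the weakly compact subsets of `X`: `G` is weakly compact and every
weakly compact set is, for each `ε > 0`, contained in `n • G + ε B_X` for some `n`. -/
def StronglyGenerates {X : Type*} [NormedAddCommGroup X] [NormedSpace ℝ X] (G : Set X) : Prop :=
  IsWeaklyCompact G ∧ ∀ W : Set X, IsWeaklyCompact W → ∀ ε : ℝ, 0 < ε →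
    ∃ n : ℕ, W ⊆ (n : ℝ) • G + Metric.closedBall (0 : X) ε

/-! If no single constant worked for all of `K`, a sequence of counterexamples would be a countable
subset of `K` violating it. This gives the uniform integrability of `K` and, for `η_m > 0` with
`∑ η_m < δ`, integers `n_m` with `μ (f ⁻¹' (n_m • G + (1/(m+1)) B_X)) ≥ 1 - η_m` for all `f ∈ K`.
Then `W = ⋂ₘ (weak closure of n_m • G + (1/(m+1)) B_X)` satisfies `μ (f ⁻¹' W) ≥ 1 - δ`.
`W` is weakly compact by Grothendieck's lemma: in the weak-star bidual, the closure of `W` lies in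
every `n_m • G + (1/(m+1)) B_{X**}`, so it is weak-star compact by Banach–Alaoglu and lies within
`1/(m+1)` of the norm-closed subspace `X` for every `m`, hence inside `X`. -/

open NormedSpace Metric Topology

theorem exists_forall_of_countable {α : Type*} {K : Set α} {p : ℕ → α → Prop}
    (h : ∀ K' ⊆ K, K'.Countable → ∃ n, ∀ a ∈ K', p n a) : ∃ n, ∀ a ∈ K, p n a := by
  by_contra! hK
  choose f hfK hf using hK
  obtain ⟨n, hn⟩ := h (range f) (range_subset_iff.2 hfK) (countable_range f)
  exact hf n (hn _ (mem_range_self n))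

theorem nullMeasurableSet_preimage_of_isClosed {E : Type*} [TopologicalSpace E]
    [TopologicalSpace.PseudoMetrizableSpace E] {μ : Measure Ω} {f : Ω → E}
    (hf : AEStronglyMeasurable f μ) {S : Set E} (hS : IsClosed S) :
    NullMeasurableSet (f ⁻¹' S) μ := by
  borelize E
  exact hf.aemeasurable.nullMeasurableSet_preimage hS.measurableSet

theorem one_sub_tsum_le_measure_iInter {μ : Measure Ω} [IsProbabilityMeasure μ] {ι : Type*}
    [Countable ι] {E : ι → Set Ω} (hE : ∀ i, NullMeasurableSet (E i) μ) {ε : ι → ℝ≥0∞}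
    (h : ∀ i, 1 - ε i ≤ μ (E i)) : 1 - ∑' i, ε i ≤ μ (⋂ i, E i) := by
  have hcompl : μ (⋂ i, E i)ᶜ ≤ ∑' i, ε i :=
    calc μ (⋂ i, E i)ᶜ = μ (⋃ i, (E i)ᶜ) := by rw [compl_iInter]
      _ ≤ ∑' i, μ (E i)ᶜ := measure_iUnion_le _
      _ ≤ ∑' i, ε i := ENNReal.tsum_le_tsum fun i => by
        rw [prob_compl_eq_one_sub₀ (hE i)]
        exact tsub_le_iff_tsub_le.1 (h i)
  calc 1 - ∑' i, ε i ≤ 1 - μ (⋂ i, E i)ᶜ := tsub_le_tsub_left hcompl 1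
    _ = μ (⋂ i, E i) := by
      rw [prob_compl_eq_one_sub₀ (NullMeasurableSet.iInter hE),
        ENNReal.sub_sub_cancel one_ne_top prob_le_one]

theorem isClosed_range_inclusionInDoubleDual {𝕜 E : Type*} [RCLike 𝕜] [NormedAddCommGroup E]
    [NormedSpace 𝕜 E] [CompleteSpace E] : IsClosed (range (inclusionInDoubleDual 𝕜 E)) :=
  (inclusionInDoubleDualLi 𝕜 (E := E)).isometry.isUniformInducing.isComplete_range.isClosed

variable (X) in
theorem inclusionInDoubleDualWeak_image_add_closedBall_subset (L : Set X) (ε : ℝ) :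
    inclusionInDoubleDualWeak ℝ X '' (toWeakSpace ℝ X '' (L + closedBall 0 ε)) ⊆
      inclusionInDoubleDualWeak ℝ X '' (toWeakSpace ℝ X '' L) +
        WeakDual.toStrongDual ⁻¹' closedBall 0 ε := by
  rintro _ ⟨_, ⟨_, ⟨a, ha, b, hb, rfl⟩, rfl⟩, rfl⟩
  refine ⟨_, ⟨_, ⟨a, ha, rfl⟩, rfl⟩, inclusionInDoubleDualWeak ℝ X (toWeakSpace ℝ X b), ?_,
    by simp only [map_add]⟩
  exact (dist_zero_right (inclusionInDoubleDual ℝ X b : StrongDual ℝ (StrongDual ℝ X))).trans_le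
    (((inclusionInDoubleDualLi ℝ).norm_map b).trans_le (mem_closedBall_zero_iff.1 hb))

theorem mem_range_inclusionInDoubleDualWeak [CompleteSpace X]
    {z : WeakDual ℝ (StrongDual ℝ X)}
    (hz : ∀ ε > 0, z ∈ range (inclusionInDoubleDualWeak ℝ X) +
      WeakDual.toStrongDual ⁻¹' closedBall 0 ε) :
    z ∈ range (inclusionInDoubleDualWeak ℝ X) := by
  have hmem : WeakDual.toStrongDual z ∈ closure (range (inclusionInDoubleDual ℝ X)) := by
    refine (Metric.mem_closure_iff (α := StrongDual ℝ (StrongDual ℝ X))).2 fun ε hε => ?_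
    obtain ⟨_, ⟨x, rfl⟩, q, hq, rfl⟩ := hz (ε / 2) (half_pos hε)
    refine ⟨_, ⟨(toWeakSpace ℝ X).symm x, rfl⟩, ?_⟩
    have hdist : dist (WeakDual.toStrongDual (inclusionInDoubleDualWeak ℝ X x + q))
        (inclusionInDoubleDual ℝ X ((toWeakSpace ℝ X).symm x)) =
        dist (WeakDual.toStrongDual q) 0 := by
      have h : WeakDual.toStrongDual (inclusionInDoubleDualWeak ℝ X x + q) =
          inclusionInDoubleDual ℝ X ((toWeakSpace ℝ X).symm x) + WeakDual.toStrongDual q := rfl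
      rw [h, dist_self_add_left (E := StrongDual ℝ (StrongDual ℝ X)),
        dist_zero_right (E := StrongDual ℝ (StrongDual ℝ X))]
    exact hdist.trans_lt (lt_of_le_of_lt hq (half_lt_self hε))
  obtain ⟨x, hx⟩ := (isClosed_range_inclusionInDoubleDual (𝕜 := ℝ) (E := X)).closure_eq ▸
    hmem
  exact ⟨toWeakSpace ℝ X x, WeakDual.toStrongDual.injective hx⟩

theorem isCompact_closure_of_subset_closure_add_closedBall [CompleteSpace X]
    {A : Set (WeakSpace ℝ X)}
    (hA : ∀ ε > 0, ∃ L : Set X, IsWeaklyCompact L ∧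
      A ⊆ closure (toWeakSpace ℝ X '' (L + closedBall 0 ε))) :
    IsCompact (closure A) := by
  set J := inclusionInDoubleDualWeak ℝ X
  have hJ : IsEmbedding J := isEmbedding_inclusionInDoubleDualWeak ℝ X
  have hcpt : ∀ L : Set X, IsWeaklyCompact L → ∀ ε : ℝ,
      IsCompact (J '' (toWeakSpace ℝ X '' L) + WeakDual.toStrongDual ⁻¹' closedBall 0 ε) :=
    fun L hL ε => (hL.image J.continuous).add (WeakDual.isCompact_closedBall 0 ε)
  have hsub : ∀ ε > 0, ∃ L : Set X, IsWeaklyCompact L ∧ closure (J '' A) ⊆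
      J '' (toWeakSpace ℝ X '' L) + WeakDual.toStrongDual ⁻¹' closedBall 0 ε := by
    intro ε hε
    obtain ⟨L, hL, hAL⟩ := hA ε hε
    refine ⟨L, hL, closure_minimal ?_ (hcpt L hL ε).isClosed⟩
    calc J '' A ⊆ J '' closure (toWeakSpace ℝ X '' (L + closedBall 0 ε)) := image_mono hAL
      _ ⊆ closure (J '' (toWeakSpace ℝ X '' (L + closedBall 0 ε))) :=
        image_closure_subset_closure_image J.continuous
      _ ⊆ _ := closure_minimal (inclusionInDoubleDualWeak_image_add_closedBall_subset X L ε)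
        (hcpt L hL ε).isClosed
  obtain ⟨L, hL, hA1⟩ := hsub 1 one_pos
  rw [hJ.closure_eq_preimage_closure_image]
  refine hJ.isCompact_preimage' ((hcpt L hL 1).of_isClosed_subset isClosed_closure hA1)
    fun z hz => mem_range_inclusionInDoubleDualWeak fun ε hε => ?_
  obtain ⟨L', -, hAε⟩ := hsub ε hε
  exact add_subset_add_right (image_subset_range _ _) (hAε hz)

theorem IsWeaklyCompact.smul {G : Set X} (hG : IsWeaklyCompact G) (c : ℝ) :
    IsWeaklyCompact (c • G) := by
  unfold IsWeaklyCompact at *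
  rw [image_smul_set]
  exact hG.smul c

theorem isWeaklyCompact_iInter_closure_add_closedBall [CompleteSpace X] {ι : Type*}
    {L : ι → Set X} (hL : ∀ i, IsWeaklyCompact (L i)) {r : ι → ℝ}
    (hr : ∀ ε > 0, ∃ i, r i ≤ ε) :
    IsWeaklyCompact
      (⋂ i, toWeakSpace ℝ X ⁻¹' closure (toWeakSpace ℝ X '' (L i + closedBall 0 (r i)))) := by
  have himage : toWeakSpace ℝ X '' ⋂ i, toWeakSpace ℝ X ⁻¹'
      closure (toWeakSpace ℝ X '' (L i + closedBall 0 (r i))) =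
      ⋂ i, closure (toWeakSpace ℝ X '' (L i + closedBall 0 (r i))) := by
    rw [image_iInter (toWeakSpace ℝ X).bijective]
    simp only [image_preimage_eq _ (toWeakSpace ℝ X).surjective]
  unfold IsWeaklyCompact
  rw [himage, ← (isClosed_iInter fun i => isClosed_closure).closure_eq]
  refine isCompact_closure_of_subset_closure_add_closedBall fun ε hε => ?_
  obtain ⟨i, hi⟩ := hr ε hε
  exact ⟨L i, hL i, (iInter_subset _ i).trans
    (closure_mono (image_mono (add_subset_add_left (closedBall_subset_closedBall hi))))⟩

theorem unifIntegrableSet_of_countable {E : Type*} [NormedAddCommGroup E] {μ : Measure Ω}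
    {K : Set (Lp E 1 μ)}
    (hK : ∀ K' ⊆ K, K'.Countable → UnifIntegrableSet μ K') : UnifIntegrableSet μ K := by
  constructor
  · obtain ⟨n, hn⟩ := exists_forall_of_countable (p := fun (n : ℕ) (f : Lp E 1 μ) => ‖f‖ ≤ n)
      fun K' hK' hc => by
        obtain ⟨⟨C, hC⟩, -⟩ := hK K' hK' hc
        obtain ⟨n, hn⟩ := exists_nat_ge C
        exact ⟨n, fun f hf => (hC f hf).trans hn⟩
    exact ⟨n, hn⟩
  · intro ε hε
    obtain ⟨n, hn⟩ := exists_forall_of_countable (K := K) (p := fun (n : ℕ) f =>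
        ∀ A : Set Ω, μ A ≤ ENNReal.ofReal (1 / (n + 1)) → ∫ ω in A, ‖(f : Ω → E) ω‖ ∂μ ≤ ε)
      fun K' hK' hc => by
        obtain ⟨-, hUI⟩ := hK K' hK' hc
        obtain ⟨δ, hδ, hδK'⟩ := hUI ε hε
        obtain ⟨n, hn⟩ := exists_nat_one_div_lt hδ
        exact ⟨n, fun f hf A hA => hδK' f hf A (hA.trans (ENNReal.ofReal_le_ofReal hn.le))⟩
    exact ⟨1 / (n + 1), Nat.one_div_pos_of_nat, hn⟩

theorem exists_forall_le_measure_preimage_smul_add_closedBall {μ : Measure Ω}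
    {G : Set X} (hG : StronglyGenerates G) {K : Set (Lp X 1 μ)}
    (hK : ∀ K' ⊆ K, K'.Countable → IsDeltaSSet μ K') {η : ℝ} (hη : 0 < η) {r : ℝ}
    (hr : 0 < r) :
    ∃ n : ℕ, ∀ f ∈ K,
      1 - ENNReal.ofReal η ≤ μ ((f : Ω → X) ⁻¹' ((n : ℝ) • G + closedBall 0 r)) :=
  exists_forall_of_countable fun K' hK' hc => by
    obtain ⟨W, hW, hWK'⟩ := (hK K' hK' hc).2 η hη
    obtain ⟨n, hn⟩ := hG.2 W hW r hr
    exact ⟨n, fun f hf => (hWK' f hf).trans (measure_mono (preimage_mono hn))⟩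

/-- If `X` is SWCG (witnessed by `G`) and every countable subset of `K ⊆ L¹(μ,X)` is a
δS-set, then `K` is a δS-set. -/
theorem isDeltaSSet_of_countable_subsets (μ : Measure Ω) [IsProbabilityMeasure μ]
    [CompleteSpace X] (G : Set X) (hG : StronglyGenerates G)
    (K : Set (Lp X 1 μ)) (hK : ∀ K' ⊆ K, K'.Countable → IsDeltaSSet μ K') :
    IsDeltaSSet μ K := by
  refine ⟨unifIntegrableSet_of_countable fun K' hK' hc => (hK K' hK' hc).1, fun δ hδ => ?_⟩
  obtain ⟨η, hη, hηδ⟩ := ENNReal.exists_pos_sum_of_countable (ENNReal.ofReal_pos.2 hδ).ne' ℕ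
  choose n hn using fun m : ℕ => exists_forall_le_measure_preimage_smul_add_closedBall hG hK
    (NNReal.coe_pos.2 (hη m)) (Nat.one_div_pos_of_nat (n := m))
  simp only [ENNReal.ofReal_coe_nnreal] at hn
  set tw := toWeakSpace ℝ X
  set C : ℕ → Set X := fun m => (n m : ℝ) • G + closedBall 0 (1 / (m + 1))
  set S : ℕ → Set X := fun m => tw ⁻¹' closure (tw '' C m)
  have hCS : ∀ m, C m ⊆ S m := fun m x hx => subset_closure (X := WeakSpace ℝ X) ⟨x, hx, rfl⟩
  refine ⟨⋂ m, S m, isWeaklyCompact_iInter_closure_add_closedBall (fun m => hG.1.smul _)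
    fun ε hε => ?_, fun f hf => ?_⟩
  · obtain ⟨m, hm⟩ := exists_nat_one_div_lt hε
    exact ⟨m, hm.le⟩
  · have hS : ∀ m, NullMeasurableSet ((f : Ω → X) ⁻¹' S m) μ := fun m =>
      nullMeasurableSet_preimage_of_isClosed (Lp.aestronglyMeasurable f)
        (isClosed_closure.preimage (toWeakSpaceCLM ℝ X).continuous)
    calc 1 - ENNReal.ofReal δ ≤ 1 - ∑' m, (η m : ℝ≥0∞) := tsub_le_tsub_left hηδ.le 1
      _ ≤ μ (⋂ m, (f : Ω → X) ⁻¹' S m) := one_sub_tsum_le_measure_iInter hS fun m =>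
        (hn m f hf).trans (measure_mono (preimage_mono (hCS m)))
      _ = μ ((f : Ω → X) ⁻¹' ⋂ m, S m) := by rw [preimage_iInter]
end
end

section
/- Let (Ω,Σ,μ) be a probability space, X a Banach space, and K ⊆ L¹(μ,X). If for every ε > 0 there exists a δS-set K_ε ⊆ L¹(μ,X) such that K ⊆ K_ε + ε B_{L¹(μ,X)}, then K is a δS-set. -/
/-!
Uniform integrability passes from the approximating sets `Kε` to `K` by the triangle inequality.
For tightness, fix `δ` and, at scale `n`, write `f ∈ K` as `gₙ + cₙ` with `gₙ` in a δS-set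
`Kₙ` and `‖cₙ‖ ≤ δ 4⁻ⁿ / 4`, and pick a weakly compact `Wₙ` holding the values of every function
in `Kₙ` up to measure `δ 2⁻ⁿ / 4`. By Chebyshev, `‖cₙ‖ ≤ 2⁻ⁿ` outside a set of measure `δ 2⁻ⁿ / 4`,
so `f` takes its values in `W = ⋂ₙ (Wₙ + 2⁻ⁿ B_X)` outside a set of measure `δ`.

`W` is weakly compact (Grothendieck): along an ultrafilter on `W` the `Wₙ`-components converge
weakly to some `yₙ ∈ Wₙ`; weak lower semicontinuity of the norm gives `‖yₙ - yₘ‖ ≤ 2⁻ⁿ + 2⁻ᵐ`,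
so `yₙ` has a norm limit `z` (this is where completeness of `X` enters), and every functional,
being uniformly approximated on `W` by its values at the components, converges to its value at `z`.
-/

open MeasureTheory Filter Set ENNReal Pointwise

noncomputable section

variable {Ω : Type*} [MeasurableSpace Ω] {X : Type*} [NormedAddCommGroup X] [NormedSpace ℝ X]

open scoped Topology

section WeakTopology

theorem tendsto_toWeakSpace_iff {α : Type*} {l : Filter α} {u : α → X} {x : X} :
    Tendsto (fun a => toWeakSpace ℝ X (u a)) l (𝓝 (toWeakSpace ℝ X x)) ↔
      ∀ φ : StrongDual ℝ X, Tendsto (fun a => φ (u a)) l (𝓝 (φ x)) :=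
  WeakBilin.tendsto_iff_forall_eval_tendsto _ fun _ _ h =>
    (SeparatingDual.eq_iff_forall_dual_eq (R := ℝ)).2 fun φ => LinearMap.congr_fun h φ

theorem isClosed_toWeakSpace_closedBall (r : ℝ) :
    IsClosed (toWeakSpace ℝ X '' Metric.closedBall 0 r) := by
  rw [← Metric.isClosed_closedBall.closure_eq, (convex_closedBall (0 : X) r).toWeakSpace_closure ℝ]
  exact isClosed_closure

theorem norm_le_of_tendsto_toWeakSpace {α : Type*} {l : Filter α} [l.NeBot] {u : α → X} {x : X}
    {r : ℝ} (hu : Tendsto (fun a => toWeakSpace ℝ X (u a)) l (𝓝 (toWeakSpace ℝ X x)))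
    (hr : ∀ᶠ a in l, ‖u a‖ ≤ r) : ‖x‖ ≤ r := by
  obtain ⟨y, hy, hyx⟩ := (isClosed_toWeakSpace_closedBall r).mem_of_tendsto hu
    (hr.mono fun a ha => mem_image_of_mem _ (mem_closedBall_zero_iff.2 ha))
  rw [(toWeakSpace ℝ X).injective hyx] at hy
  exact mem_closedBall_zero_iff.1 hy

theorem IsWeaklyCompact.isClosed {W : Set X} (hW : IsWeaklyCompact W) : IsClosed W := by
  rw [← (toWeakSpace ℝ X).preimage_image W]
  exact (IsCompact.isClosed hW).preimage (toWeakSpaceCLM ℝ X).continuous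

theorem IsWeaklyCompact.exists_tendsto {W : Set X} (hW : IsWeaklyCompact W) {α : Type*}
    {F : Ultrafilter α} {u : α → X} (hu : ∀ᶠ a in F, u a ∈ W) :
    ∃ y ∈ W, Tendsto (fun a => toWeakSpace ℝ X (u a)) F (𝓝 (toWeakSpace ℝ X y)) := by
  obtain ⟨_, ⟨y, hy, rfl⟩, hle⟩ := hW.ultrafilter_le_nhds (F.map (toWeakSpace ℝ X ∘ u))
    (le_principal_iff.2 (hu.mono fun a ha => mem_image_of_mem _ ha))
  exact ⟨y, hy, hle⟩

theorem isWeaklyCompact_of_forall_ultrafilter {S : Set X}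
    (h : ∀ F : Ultrafilter X, S ∈ F →
      ∃ y ∈ S, Tendsto (toWeakSpace ℝ X) F (𝓝 (toWeakSpace ℝ X y))) :
    IsWeaklyCompact S := by
  refine isCompact_iff_ultrafilter_le_nhds.2 fun G hG => ?_
  have hmap : (G.map (toWeakSpace ℝ X).symm).map (toWeakSpace ℝ X) = G := by
    simp [Ultrafilter.map_map, Function.comp_def]
  obtain ⟨y, hy, hGy⟩ := h (G.map (toWeakSpace ℝ X).symm) <| by
    simpa [Ultrafilter.mem_map, (toWeakSpace ℝ X).image_eq_preimage_symm] using
      le_principal_iff.1 hG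
  exact ⟨_, mem_image_of_mem _ hy, hmap ▸ hGy⟩

theorem tendstoUniformlyOnFilter_of_forall_dist_le {ι α β : Type*} [PseudoMetricSpace β]
    {F : ι → α → β} {f : α → β} {p : Filter ι} {p' : Filter α} {r : ι → ℝ}
    (hr : Tendsto r p (𝓝 0)) (h : ∀ᶠ a in p', ∀ i, dist (f a) (F i a) ≤ r i) :
    TendstoUniformlyOnFilter F f p p' :=
  Metric.tendstoUniformlyOnFilter_iff.2 fun _ hε =>
    ((hr.eventually (gt_mem_nhds hε)).prod_mk h).mono fun _ ⟨hlt, hle⟩ => (hle _).trans_lt hlt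

theorem cauchySeq_of_dist_le_add {α : Type*} [PseudoMetricSpace α] {y : ℕ → α} {r : ℕ → ℝ}
    (hr : Tendsto r atTop (𝓝 0)) (hy : ∀ n m, dist (y n) (y m) ≤ r n + r m) : CauchySeq y := by
  refine Metric.cauchySeq_iff'.2 fun ε hε => ?_
  obtain ⟨N, hN⟩ := eventually_atTop.1 (hr.eventually (gt_mem_nhds (half_pos hε)))
  exact ⟨N, fun n hn => (hy n N).trans_lt (by linarith [hN n hn, hN N le_rfl])⟩

theorem isWeaklyCompact_iInter_add_closedBall [CompleteSpace X] {W : ℕ → Set X}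
    (hW : ∀ n, IsWeaklyCompact (W n)) {r : ℕ → ℝ} (hr : Tendsto r atTop (𝓝 0)) :
    IsWeaklyCompact (⋂ n, W n + Metric.closedBall (0 : X) (r n)) := by
  refine isWeaklyCompact_of_forall_ultrafilter fun F hSF => ?_
  have hdec : ∀ n, ∀ x ∈ ⋂ n, W n + Metric.closedBall (0 : X) (r n), ∃ w ∈ W n, ‖x - w‖ ≤ r n :=
    fun n x hx => by
      obtain ⟨w, hw, b, hb, rfl⟩ := mem_iInter.1 hx n
      exact ⟨w, hw, by simpa using hb⟩
  choose! w hwW hwx using hdec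
  choose y hyW hy using fun n => (hW n).exists_tendsto (F := F) (u := w n)
    (Filter.mem_of_superset hSF fun x hx => hwW n x hx)
  have hyy : ∀ n m, dist (y n) (y m) ≤ r n + r m := fun n m => by
    rw [dist_eq_norm]
    refine norm_le_of_tendsto_toWeakSpace (u := fun x => w n x - w m x)
      (by simpa only [map_sub] using (hy n).sub (hy m))
      (Filter.mem_of_superset hSF fun x hx => ?_)
    calc ‖w n x - w m x‖ = ‖(x - w m x) - (x - w n x)‖ := by congr 1; abel
      _ ≤ ‖x - w m x‖ + ‖x - w n x‖ := norm_sub_le _ _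
      _ ≤ r n + r m := by linarith [hwx n x hx, hwx m x hx]
  obtain ⟨z, hz⟩ := cauchySeq_tendsto_of_complete (cauchySeq_of_dist_le_add hr hyy)
  have hyz : ∀ n, ‖y n - z‖ ≤ r n := fun n =>
    le_of_tendsto_of_tendsto' (tendsto_const_nhds.sub hz).norm
      (by simpa using tendsto_const_nhds.add hr) fun m => by simpa only [dist_eq_norm] using hyy n m
  refine ⟨z, mem_iInter.2 fun n => ⟨y n, hyW n, z - y n, ?_, add_sub_cancel _ _⟩, ?_⟩
  · simpa [norm_sub_rev] using hyz n
  refine tendsto_toWeakSpace_iff.2 fun φ => ?_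
  refine TendstoUniformlyOnFilter.tendsto_of_eventually_tendsto (F := fun n x => φ (w n x))
    (tendstoUniformlyOnFilter_of_forall_dist_le (by simpa using hr.const_mul ‖φ‖) ?_)
    (Eventually.of_forall fun n => tendsto_toWeakSpace_iff.1 (hy n) φ)
    ((φ.continuous.tendsto z).comp hz)
  refine Filter.mem_of_superset hSF fun x hx n => ?_
  rw [dist_eq_norm, ← map_sub]
  exact φ.le_opNorm_of_le (hwx n x hx)

end WeakTopology

section L1

variable {μ : Measure Ω} {E : Type*} [NormedAddCommGroup E]

theorem setIntegral_norm_le_norm (f : Lp E 1 μ) (A : Set Ω) : ∫ ω in A, ‖f ω‖ ∂μ ≤ ‖f‖ := by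
  rw [L1.norm_eq_integral_norm]
  exact setIntegral_le_integral (L1.integrable_coeFn f).norm
    (Eventually.of_forall fun _ => norm_nonneg _)

theorem setIntegral_norm_add_le (f g : Lp E 1 μ) (A : Set Ω) :
    ∫ ω in A, ‖(f + g : Lp E 1 μ) ω‖ ∂μ ≤ ∫ ω in A, ‖f ω‖ ∂μ + ∫ ω in A, ‖g ω‖ ∂μ := by
  have hf := (L1.integrable_coeFn f).norm.restrict (s := A)
  have hg := (L1.integrable_coeFn g).norm.restrict (s := A)
  rw [← integral_add hf hg]
  refine integral_mono_ae (L1.integrable_coeFn (f + g)).norm.restrict (hf.add hg) ?_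
  filter_upwards [ae_restrict_of_ae (Lp.coeFn_add f g)] with ω hω
  simpa only [hω, Pi.add_apply] using norm_add_le (f ω) (g ω)

theorem UnifIntegrableSet.of_perturbation {K : Set (Lp E 1 μ)}
    (h : ∀ ε : ℝ, 0 < ε → ∃ Kε, UnifIntegrableSet μ Kε ∧
      K ⊆ Kε + Metric.closedBall (0 : Lp E 1 μ) ε) :
    UnifIntegrableSet μ K := by
  refine ⟨?_, fun ε hε => ?_⟩
  · obtain ⟨K₁, ⟨⟨C, hC⟩, -⟩, hK₁⟩ := h 1 one_pos
    refine ⟨C + 1, fun f hf => ?_⟩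
    obtain ⟨g, hg, c, hc, rfl⟩ := hK₁ hf
    exact (norm_add_le g c).trans (add_le_add (hC g hg) (mem_closedBall_zero_iff.1 hc))
  · obtain ⟨Kε, ⟨-, hKε⟩, hsub⟩ := h (ε / 2) (half_pos hε)
    obtain ⟨δ, hδ, hδK⟩ := hKε (ε / 2) (half_pos hε)
    refine ⟨δ, hδ, fun f hf A hA => ?_⟩
    obtain ⟨g, hg, c, hc, rfl⟩ := hsub hf
    calc ∫ ω in A, ‖(g + c : Lp E 1 μ) ω‖ ∂μ ≤ ∫ ω in A, ‖g ω‖ ∂μ + ∫ ω in A, ‖c ω‖ ∂μ :=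
          setIntegral_norm_add_le g c A
      _ ≤ ε / 2 + ε / 2 := add_le_add (hδK g hg A hA)
          ((setIntegral_norm_le_norm c A).trans (mem_closedBall_zero_iff.1 hc))
      _ = ε := add_halves ε

theorem measure_lt_norm_le (c : Lp E 1 μ) {r : ℝ} (hr : 0 < r) :
    μ {ω | r < ‖c ω‖} ≤ ENNReal.ofReal (‖c‖ / r) := by
  calc μ {ω | r < ‖c ω‖} ≤ μ {ω | ENNReal.ofReal r ≤ ‖c ω‖ₑ} :=
        measure_mono fun ω hω => by simpa [← ofReal_norm] using ENNReal.ofReal_le_ofReal hω.le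
    _ ≤ (∫⁻ ω, ‖c ω‖ₑ ∂μ) / ENNReal.ofReal r :=
        meas_ge_le_lintegral_div (Lp.aestronglyMeasurable c).enorm
          (by simpa using hr) ENNReal.ofReal_ne_top
    _ = ENNReal.ofReal (‖c‖ / r) := by
        rw [← eLpNorm_one_eq_lintegral_enorm, ← Lp.enorm_def, ← ofReal_norm,
          ENNReal.ofReal_div_of_pos hr]

end L1

section Tightness

variable {μ : Measure Ω} [IsProbabilityMeasure μ]

theorem measure_compl_le_of_one_sub_le {s : Set Ω} (hs : NullMeasurableSet s μ) {t : ℝ≥0∞}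
    (h : 1 - t ≤ μ s) : μ sᶜ ≤ t := by
  rw [prob_compl_eq_one_sub₀ hs]
  exact tsub_le_iff_tsub_le.1 h

theorem one_sub_tsum_le_measure_iInter_s7 {s : ℕ → Set Ω} {a : ℕ → ℝ≥0∞}
    (h : ∀ n, μ (s n)ᶜ ≤ a n) : 1 - ∑' n, a n ≤ μ (⋂ n, s n) := by
  rw [tsub_le_iff_right]
  calc 1 = μ ((⋂ n, s n) ∪ (⋂ n, s n)ᶜ) := by rw [union_compl_self, measure_univ]
    _ ≤ μ (⋂ n, s n) + μ (⋃ n, (s n)ᶜ) := by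
        rw [compl_iInter]; exact measure_union_le _ _
    _ ≤ μ (⋂ n, s n) + ∑' n, a n :=
        add_le_add_right ((measure_iUnion_le _).trans (ENNReal.tsum_le_tsum h)) _

theorem measure_compl_preimage_add_closedBall_le {E : Type*} [NormedAddCommGroup E]
    {K : Set (Lp E 1 μ)} {W : Set E} (hW : IsClosed W) {η ε r : ℝ} (hr : 0 < r)
    (hK : ∀ g ∈ K, 1 - ENNReal.ofReal η ≤ μ ((g : Ω → E) ⁻¹' W)) {f : Lp E 1 μ}
    (hf : f ∈ K + Metric.closedBall 0 ε) :
    μ ((f : Ω → E) ⁻¹' (W + Metric.closedBall 0 r))ᶜ ≤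
      ENNReal.ofReal η + ENNReal.ofReal (ε / r) := by
  borelize E
  obtain ⟨g, hg, c, hc, rfl⟩ := hf
  have hsub : ∀ᵐ ω ∂μ, ω ∈ (((g + c : Lp E 1 μ) : Ω → E) ⁻¹' (W + Metric.closedBall 0 r))ᶜ →
      ω ∈ ((g : Ω → E) ⁻¹' W)ᶜ ∪ {ω | r < ‖c ω‖} := by
    filter_upwards [Lp.coeFn_add g c] with ω hω hω'
    by_contra hmem
    simp only [mem_union, mem_compl_iff, mem_preimage, mem_ofPred_eq, not_or, not_not,
      not_lt] at hmem
    rw [mem_compl_iff, mem_preimage, hω] at hω'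
    exact hω' (add_mem_add hmem.1 (mem_closedBall_zero_iff.2 hmem.2))
  have hg' : μ ((g : Ω → E) ⁻¹' W)ᶜ ≤ ENNReal.ofReal η :=
    measure_compl_le_of_one_sub_le
      ((Lp.aestronglyMeasurable g).aemeasurable.nullMeasurableSet_preimage hW.measurableSet)
      (hK g hg)
  calc _ ≤ μ (((g : Ω → E) ⁻¹' W)ᶜ ∪ {ω | r < ‖c ω‖}) := measure_mono_ae hsub
    _ ≤ μ ((g : Ω → E) ⁻¹' W)ᶜ + μ {ω | r < ‖c ω‖} := measure_union_le _ _
    _ ≤ ENNReal.ofReal η + ENNReal.ofReal (ε / r) :=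
        add_le_add hg' ((measure_lt_norm_le c hr).trans (ENNReal.ofReal_le_ofReal
          (div_le_div_of_nonneg_right (mem_closedBall_zero_iff.1 hc) hr.le)))

end Tightness

/-- The second half of `IsDeltaSSet`: `IsDeltaSSet μ K` unfolds to
`UnifIntegrableSet μ K ∧ IsWeaklyTight μ K`. -/
def IsWeaklyTight (μ : Measure Ω) (K : Set (Lp X 1 μ)) : Prop :=
  ∀ δ : ℝ, 0 < δ → ∃ W : Set X, IsWeaklyCompact W ∧
    ∀ f ∈ K, 1 - ENNReal.ofReal δ ≤ μ ((f : Ω → X) ⁻¹' W)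

theorem IsWeaklyTight.of_perturbation [CompleteSpace X] {μ : Measure Ω} [IsProbabilityMeasure μ]
    {K : Set (Lp X 1 μ)}
    (h : ∀ ε : ℝ, 0 < ε → ∃ Kε, IsWeaklyTight μ Kε ∧
      K ⊆ Kε + Metric.closedBall (0 : Lp X 1 μ) ε) :
    IsWeaklyTight μ K := by
  intro δ hδ
  set r : ℕ → ℝ := fun n => 2⁻¹ ^ n
  set η : ℕ → ℝ := fun n => δ / 4 * r n
  have hr : ∀ n, 0 < r n := fun n => by positivity
  have hη : ∀ n, 0 < η n := fun n => by positivity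
  choose Kn hKn hKsub using fun n => h (η n * r n) (mul_pos (hη n) (hr n))
  choose W hW hKW using fun n => hKn n (η n) (hη n)
  have hsum : HasSum (fun n => 2 * η n) δ := by
    have hgeom := (hasSum_geometric_of_lt_one (r := (2 : ℝ)⁻¹) (by norm_num) (by norm_num)).mul_left
      (δ / 2)
    rw [show (1 - (2 : ℝ)⁻¹)⁻¹ = 2 by norm_num, div_mul_cancel₀ δ two_ne_zero] at hgeom
    exact hgeom.congr_fun fun n => by simp only [η, r]; ring
  refine ⟨⋂ n, W n + Metric.closedBall 0 (r n), isWeaklyCompact_iInter_add_closedBall hW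
    (tendsto_pow_atTop_nhds_zero_of_lt_one (by norm_num) (by norm_num)), fun f hf => ?_⟩
  rw [preimage_iInter, ← hsum.tsum_eq, 
    ENNReal.ofReal_tsum_of_nonneg (fun n => by positivity) hsum.summable]
  refine one_sub_tsum_le_measure_iInter_s7 fun n => ?_
  calc _ ≤ ENNReal.ofReal (η n) + ENNReal.ofReal (η n * r n / r n) :=
        measure_compl_preimage_add_closedBall_le (hW n).isClosed (hr n) (hKW n) (hKsub n hf)
    _ = ENNReal.ofReal (2 * η n) := by
        rw [mul_div_cancel_right₀ _ (hr n).ne', ← ENNReal.ofReal_add (hη n).le (hη n).le, two_mul]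

/-- If for every `ε > 0` there is a δS-set `Kε ⊆ L¹(μ,X)` with
`K ⊆ Kε + ε B_{L¹(μ,X)}`, then `K` is a δS-set. -/
theorem isDeltaSSet_of_perturbation (μ : Measure Ω) [IsProbabilityMeasure μ] [CompleteSpace X]
    (K : Set (Lp X 1 μ))
    (h : ∀ ε : ℝ, 0 < ε → ∃ Kε : Set (Lp X 1 μ), IsDeltaSSet μ Kε ∧
      K ⊆ Kε + Metric.closedBall (0 : Lp X 1 μ) ε) :
    IsDeltaSSet μ K :=
  ⟨UnifIntegrableSet.of_perturbation fun ε hε =>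
      (h ε hε).imp fun _ ⟨hKε, hsub⟩ => ⟨hKε.1, hsub⟩,
    IsWeaklyTight.of_perturbation fun ε hε =>
      (h ε hε).imp fun _ ⟨hKε, hsub⟩ => ⟨hKε.2, hsub⟩⟩
end
end
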